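/- arXiv:1911.08689 — 5 statements merged into one kernel-verified Lean document; each statement's English description precedes it below -/
import Mathlib

section
/- Let m ≥ 2 and a₁,…,a_m ≥ 0 be nonnegative reals, and let ε ≥ 0. Then clip_{ε}(Σᵢ aᵢ) ≤ 2 · Σᵢ clip_{ε/(2m)}(aᵢ), where clip_{ε}(x) := x · 1{x ≥ ε}. -/
noncomputable def clip (ε x : ℝ) : ℝ := if ε ≤ x then x else 0

/-- Clipping distributes across a sum of `m ≥ 2` nonnegative terms up to a factor 2,
    with threshold reduced by a factor of `2m`. -/
theorem clip_sum_le (m : ℕ) (hm : 2 ≤ m) (a : Fin m → ℝ) (ha : ∀ i, 0 ≤ a i)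
    (ε : ℝ) (hε : 0 ≤ ε) :
    clip ε (∑ i, a i) ≤ 2 * ∑ i, clip (ε / (2 * m)) (a i) := by
  have hclip_nonneg : ∀ i, 0 ≤ clip (ε / (2 * m)) (a i) := by
    intro i; unfold clip; split; exacts [ha i, le_rfl]
  have hS : 0 ≤ ∑ i, clip (ε / (2 * m)) (a i) :=
    Finset.sum_nonneg fun i _ => hclip_nonneg i
  unfold clip at hS ⊢
  split
  · rename_i hsum
    set δ := ε / (2 * m) with hδ
    have hm0 : (0:ℝ) < 2 * m := by positivity
    classical
    have key : ∀ i, a i ≤ (if δ ≤ a i then a i else 0) + δ := by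
      intro i
      split
      · linarith [div_nonneg hε hm0.le]
      · rename_i h; push_neg at h; linarith
    have hsum2 : ∑ i, a i ≤ (∑ i, if δ ≤ a i then a i else 0) + m * δ := by
      calc ∑ i, a i ≤ ∑ i, ((if δ ≤ a i then a i else 0) + δ) :=
            Finset.sum_le_sum fun i _ => key i
        _ = (∑ i, if δ ≤ a i then a i else 0) + m * δ := by
            rw [Finset.sum_add_distrib]; simp [mul_comm]
    have hmδ : (m:ℝ) * δ = ε / 2 := by
      rw [hδ]; field_simp
    linarith [hsum2, hmδ]
  · linarith [hS]
end

section
/- Let φ₁, …, φ_N ∈ ℝ^d with ‖φᵢ‖₂ ≤ 1 for all i, let λ ≥ 1, and define Λ_k = λ·I + Σ_{i<k} φᵢφᵢᵀ for each k. Then Σ_{k=1}^N sqrt(φ_kᵀ Λ_k⁻¹ φ_k) ≤ sqrt(2·N·d·log(1 + N/λ)). -/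
open Matrix Finset

/-!
By the matrix determinant lemma, `det Λ_{k+1} = det Λ_k * (1 + x_k)` with
`x_k = φ_kᵀ Λ_k⁻¹ φ_k`, so `∑ log (1 + x_k) = log det Λ_N - d log λ ≤ d log (1 + N / λ)`, since
every eigenvalue of `Λ_N` is at most `λ + N`. As `Λ_k ≥ λ I ≥ I`, each `x_k` lies in `[0, 1]`,
where `x ≤ 2 log (1 + x)`; Cauchy–Schwarz turns the resulting bound on `∑ x_k` into one on
`∑ √x_k`.
-/

theorem Real.le_two_mul_log_one_add {x : ℝ} (h0 : 0 ≤ x) (h2 : x ≤ 2) :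
    x ≤ 2 * Real.log (1 + x) := by
  have h := Real.le_log_one_add_of_nonneg h0
  rw [div_le_iff₀ (by linarith)] at h
  nlinarith [Real.log_nonneg (by linarith : (1 : ℝ) ≤ 1 + x)]

theorem Real.sum_sqrt_le_sqrt_card_mul_sum {ι : Type*} (s : Finset ι) {f : ι → ℝ}
    (hf : ∀ i ∈ s, 0 ≤ f i) : ∑ i ∈ s, √(f i) ≤ √(#s * ∑ i ∈ s, f i) := by
  refine Real.le_sqrt_of_sq_le ((sq_sum_le_card_mul_sum_sq).trans_eq ?_)
  rw [sum_congr rfl fun i hi => Real.sq_sqrt (hf i hi)]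

namespace Matrix

variable {n : Type*} [Fintype n]

theorem dotProduct_sq_le_dotProduct_self_mul (u v : n → ℝ) :
    (u ⬝ᵥ v) ^ 2 ≤ (u ⬝ᵥ u) * (v ⬝ᵥ v) := by
  simpa [dotProduct, sq] using sum_mul_sq_le_sq_mul_sq univ u v

theorem dotProduct_vecMulVec_self_mulVec {R : Type*} [CommSemiring R] (u x : n → R) :
    x ⬝ᵥ (vecMulVec u u *ᵥ x) = (u ⬝ᵥ x) ^ 2 := by
  rw [vecMulVec_mulVec, op_smul_eq_smul, dotProduct_smul, smul_eq_mul, dotProduct_comm, sq]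

theorem posSemidef_vecMulVec_self (u : n → ℝ) : (vecMulVec u u).PosSemidef := by
  simpa using posSemidef_vecMulVec_self_star u

theorem posSemidef_sum_vecMulVec_self {ι : Type*} (u : ι → n → ℝ) (s : Finset ι) :
    (∑ i ∈ s, vecMulVec (u i) (u i)).PosSemidef :=
  posSemidef_sum s fun i _ => posSemidef_vecMulVec_self (u i)

variable [DecidableEq n]

theorem det_add_vecMulVec {R : Type*} [CommRing R] {A : Matrix n n R}
    (hA : IsUnit A.det) (u v : n → R) :
    (A + vecMulVec u v).det = A.det * (1 + v ⬝ᵥ (A⁻¹ *ᵥ u)) := by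
  rw [vecMulVec_eq Unit, det_add_replicateCol_mul_replicateRow hA, Matrix.mul_assoc,
    ← replicateCol_mulVec, det_unique (1 + _ : Matrix Unit Unit R), add_apply, one_apply_eq,
    replicateRow_mul_replicateCol_apply]

theorem posSemidef_one_sub_vecMulVec_self {u : n → ℝ} (hu : u ⬝ᵥ u ≤ 1) :
    (1 - vecMulVec u u).PosSemidef := by
  refine .of_dotProduct_mulVec_nonneg ?_ fun x => ?_
  · exact isHermitian_one.sub (posSemidef_vecMulVec_self u).isHermitian
  · rw [star_trivial, sub_mulVec, one_mulVec, dotProduct_sub, dotProduct_vecMulVec_self_mulVec]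
    have hx : 0 ≤ x ⬝ᵥ x := by simpa using dotProduct_self_star_nonneg x
    nlinarith [dotProduct_sq_le_dotProduct_self_mul u x, mul_nonneg (sub_nonneg.2 hu) hx]

theorem IsHermitian.eigenvalues_le_of_posSemidef_smul_one_sub {A : Matrix n n ℝ}
    (hA : A.IsHermitian) {b : ℝ} (h : (b • 1 - A).PosSemidef) (j : n) :
    hA.eigenvalues j ≤ b := by
  set v : n → ℝ := ⇑(hA.eigenvectorBasis j)
  have hv : v ⬝ᵥ v = 1 := by
    have h1 := real_inner_self_eq_norm_sq (hA.eigenvectorBasis j)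
    rwa [hA.eigenvectorBasis.orthonormal.1 j, one_pow, EuclideanSpace.inner_eq_star_dotProduct,
      star_trivial] at h1
  have := h.dotProduct_mulVec_nonneg v
  rw [star_trivial, sub_mulVec, dotProduct_sub, smul_mulVec, one_mulVec, dotProduct_smul, hv,
    hA.mulVec_eigenvectorBasis, dotProduct_smul, hv] at this
  simpa using this

theorem PosSemidef.det_le_pow_card {A : Matrix n n ℝ} (hA : A.PosSemidef) {b : ℝ}
    (h : (b • 1 - A).PosSemidef) : A.det ≤ b ^ Fintype.card n := by
  rw [hA.isHermitian.det_eq_prod_eigenvalues]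
  calc ∏ j, (hA.isHermitian.eigenvalues j : ℝ)
      ≤ ∏ _j : n, b := prod_le_prod (fun j _ => hA.eigenvalues_nonneg j)
        fun j _ => hA.isHermitian.eigenvalues_le_of_posSemidef_smul_one_sub h j
    _ = b ^ Fintype.card n := by rw [prod_const, card_univ]

theorem dotProduct_inv_mulVec_le_div {A : Matrix n n ℝ} {c : ℝ} (hc : 0 < c)
    (hA : (A - c • 1).PosSemidef) (u : n → ℝ) : u ⬝ᵥ (A⁻¹ *ᵥ u) ≤ (u ⬝ᵥ u) / c := by
  have hApd : A.PosDef := by simpa using (PosDef.one.smul hc).add_posSemidef hA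
  set y := A⁻¹ *ᵥ u
  have hAy : A *ᵥ y = u := by
    rw [mulVec_mulVec, mul_nonsing_inv _ (isUnit_iff_ne_zero.2 hApd.det_pos.ne'), one_mulVec]
  have hquad : c * (y ⬝ᵥ y) ≤ u ⬝ᵥ y := by
    have := hA.dotProduct_mulVec_nonneg y
    rwa [star_trivial, sub_mulVec, dotProduct_sub, smul_mulVec, one_mulVec, dotProduct_smul,
      smul_eq_mul, hAy, dotProduct_comm, sub_nonneg] at this
  have hx : 0 ≤ u ⬝ᵥ y := by simpa using hApd.inv.posSemidef.dotProduct_mulVec_nonneg u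
  have huu : 0 ≤ u ⬝ᵥ u := by simpa using dotProduct_self_star_nonneg u
  -- `x = u ⬝ᵥ y = yᵀ A y ≥ c ‖y‖²`, so Cauchy–Schwarz gives `x² ≤ ‖u‖² ‖y‖² ≤ ‖u‖² x / c`
  have hcs := dotProduct_sq_le_dotProduct_self_mul u y
  have key : u ⬝ᵥ y * (u ⬝ᵥ y * c) ≤ u ⬝ᵥ y * (u ⬝ᵥ u) := by
    nlinarith [mul_le_mul_of_nonneg_left hcs hc.le, mul_le_mul_of_nonneg_left hquad huu]
  rw [le_div_iff₀ hc]
  rcases hx.eq_or_lt with hx0 | hxpos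
  · rwa [← hx0, zero_mul]
  · exact le_of_mul_le_mul_left key hxpos

def regularizedGram {ι : Type*} (c : ℝ) (u : ι → n → ℝ) (s : Finset ι) : Matrix n n ℝ :=
  c • 1 + ∑ i ∈ s, vecMulVec (u i) (u i)

section RegularizedGram

variable {ι : Type*} {c : ℝ} (u : ι → n → ℝ) (s : Finset ι)

theorem posSemidef_regularizedGram_sub_smul_one : (regularizedGram c u s - c • 1).PosSemidef := by
  simpa [regularizedGram] using posSemidef_sum_vecMulVec_self u s

theorem posDef_regularizedGram (hc : 0 < c) : (regularizedGram c u s).PosDef :=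
  (PosDef.one.smul hc).add_posSemidef (posSemidef_sum_vecMulVec_self u s)

omit [Fintype n] in
theorem regularizedGram_insert [DecidableEq ι] {a : ι} (ha : a ∉ s) :
    regularizedGram c u (insert a s) = regularizedGram c u s + vecMulVec (u a) (u a) := by
  rw [regularizedGram, regularizedGram, sum_insert ha, add_comm (vecMulVec _ _), add_assoc]

theorem det_regularizedGram_le (hc : 0 ≤ c) (hu : ∀ i ∈ s, u i ⬝ᵥ u i ≤ 1) :
    (regularizedGram c u s).det ≤ (c + #s) ^ Fintype.card n := by
  have hsplit : (c + #s) • (1 : Matrix n n ℝ) - regularizedGram c u s =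
      ∑ i ∈ s, (1 - vecMulVec (u i) (u i)) := by
    rw [regularizedGram, sum_sub_distrib, sum_const, add_smul, Nat.cast_smul_eq_nsmul]
    abel
  have hgap : ((c + #s) • (1 : Matrix n n ℝ) - regularizedGram c u s).PosSemidef := by
    rw [hsplit]
    exact posSemidef_sum s fun i hi => posSemidef_one_sub_vecMulVec_self (hu i hi)
  exact PosSemidef.det_le_pow_card
    ((PosSemidef.one.smul hc).add (posSemidef_sum_vecMulVec_self u s)) hgap

theorem det_regularizedGram_eq_prod [LinearOrder ι] (hc : 0 < c) :
    (regularizedGram c u s).det = c ^ Fintype.card n *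
      ∏ k ∈ s, (1 + u k ⬝ᵥ ((regularizedGram c u (s.filter (· < k)))⁻¹ *ᵥ u k)) := by
  induction s using Finset.induction_on_max with
  | empty => simp [regularizedGram]
  | insert a s has ih =>
    have ha : a ∉ s := fun h => lt_irrefl a (has a h)
    have hfilter_a : (insert a s).filter (· < a) = s := by
      rw [filter_insert, if_neg (lt_irrefl a), filter_true_of_mem has]
    have hterm : ∀ k ∈ s,
        1 + u k ⬝ᵥ ((regularizedGram c u ((insert a s).filter (· < k)))⁻¹ *ᵥ u k) =
          1 + u k ⬝ᵥ ((regularizedGram c u (s.filter (· < k)))⁻¹ *ᵥ u k) := fun k hk => by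
      rw [filter_insert, if_neg (lt_asymm (has k hk))]
    rw [regularizedGram_insert u s ha,
      det_add_vecMulVec (isUnit_iff_ne_zero.2 (posDef_regularizedGram u s hc).det_pos.ne'), ih,
      prod_insert ha, hfilter_a, prod_congr rfl hterm]
    ring

theorem sum_log_one_add_dotProduct_inv_regularizedGram_le [LinearOrder ι] (hc : 0 < c)
    (hu : ∀ i ∈ s, u i ⬝ᵥ u i ≤ 1) :
    ∑ k ∈ s, Real.log (1 + u k ⬝ᵥ ((regularizedGram c u (s.filter (· < k)))⁻¹ *ᵥ u k)) ≤
      Fintype.card n * Real.log (1 + #s / c) := by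
  have hpos : ∀ k ∈ s,
      0 < 1 + u k ⬝ᵥ ((regularizedGram c u (s.filter (· < k)))⁻¹ *ᵥ u k) := fun k _ => by
    have hinv := (posDef_regularizedGram u (s.filter (· < k)) hc).inv.posSemidef
    linarith [star_trivial (u k) ▸ hinv.dotProduct_mulVec_nonneg (u k)]
  have hlog_det := Real.log_le_log (posDef_regularizedGram u s hc).det_pos
    (det_regularizedGram_le u s hc.le hu)
  rw [det_regularizedGram_eq_prod u s hc, Real.log_mul (by positivity)
      (prod_pos hpos).ne', Real.log_prod fun k hk => (hpos k hk).ne', Real.log_pow,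
    Real.log_pow] at hlog_det
  have hsplit : Real.log (1 + #s / c) = Real.log (c + #s) - Real.log c := by
    rw [← Real.log_div (by positivity) hc.ne', add_div, div_self hc.ne']
  rw [hsplit]
  linarith

end RegularizedGram

end Matrix

/-- Elliptical potential lemma: with `‖φᵢ‖₂ ≤ 1`, `λ ≥ 1` and
    `Λ_k = λI + Σ_{i<k} φᵢφᵢᵀ`, we have
    `Σ_{k<N} √(φ_kᵀ Λ_k⁻¹ φ_k) ≤ √(2 N d log(1 + N/λ))`. -/
theorem elliptical_potential (d N : ℕ) (lam : ℝ) (hlam : 1 ≤ lam)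
    (φ : Fin N → Fin d → ℝ) (hφ : ∀ i, Real.sqrt (φ i ⬝ᵥ φ i) ≤ 1)
    (Λ : Fin N → Matrix (Fin d) (Fin d) ℝ)
    (hΛ : ∀ k, Λ k = lam • (1 : Matrix (Fin d) (Fin d) ℝ) +
      ∑ i ∈ Finset.univ.filter (fun i => i < k), vecMulVec (φ i) (φ i)) :
    ∑ k, Real.sqrt (φ k ⬝ᵥ ((Λ k)⁻¹.mulVec (φ k))) ≤
      Real.sqrt (2 * N * d * Real.log (1 + N / lam)) := by
  have hlam0 : 0 < lam := by linarith
  have hΛ' : ∀ k, Λ k = regularizedGram lam φ (univ.filter (· < k)) := hΛ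
  have hφ1 : ∀ i ∈ univ, φ i ⬝ᵥ φ i ≤ 1 := fun i _ => Real.sqrt_le_one.mp (hφ i)
  set x : Fin N → ℝ := fun k => φ k ⬝ᵥ ((Λ k)⁻¹ *ᵥ φ k)
  have hx0 : ∀ k ∈ univ, 0 ≤ x k := fun k _ => by
    simpa [x, hΛ'] using
      (posDef_regularizedGram φ _ hlam0).inv.posSemidef.dotProduct_mulVec_nonneg (φ k)
  have hx1 : ∀ k, x k ≤ 1 := fun k => by
    calc x k ≤ (φ k ⬝ᵥ φ k) / lam := by
          simp only [x, hΛ']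
          exact dotProduct_inv_mulVec_le_div hlam0
            (posSemidef_regularizedGram_sub_smul_one φ _) (φ k)
      _ ≤ 1 := by rw [div_le_one hlam0]; linarith [hφ1 k (mem_univ k)]
  have hlog : ∑ k, Real.log (1 + x k) ≤ d * Real.log (1 + N / lam) := by
    simpa [x, hΛ'] using sum_log_one_add_dotProduct_inv_regularizedGram_le φ univ hlam0 hφ1
  have hsum : ∑ k, x k ≤ 2 * (d * Real.log (1 + N / lam)) := calc
    ∑ k, x k ≤ ∑ k, 2 * Real.log (1 + x k) := sum_le_sum fun k hk =>
        Real.le_two_mul_log_one_add (hx0 k hk) (by linarith [hx1 k])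
    _ ≤ 2 * (d * Real.log (1 + N / lam)) := by rw [← mul_sum]; linarith
  calc ∑ k, √(x k) ≤ √(N * ∑ k, x k) := by
        simpa using Real.sum_sqrt_le_sqrt_card_mul_sum univ hx0
    _ ≤ √(2 * N * d * Real.log (1 + N / lam)) :=
        Real.sqrt_le_sqrt ((mul_le_mul_of_nonneg_left hsum N.cast_nonneg).trans_eq (by ring))
end

section
/- Consider a random nondecreasing sequence ℓ₁ ≤ ℓ₂ ≤ … ≤ ℓ_H of indices in {1,…,L} generated as follows: ℓ₀ = 1, and at each step h, given ℓ_{h−1} = f, the sequence moves to a new value ℓ > f with probability 2^{−(ℓ−f)}/(2ℓH), and otherwise stays at f. Then for every h ∈ {1,…,H} and every f ∈ {2,…,L}, Pr[ℓ_h = f] ≤ 2^{−f}. -/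
lemma geom_aux (a : ℕ) : ∀ b, a ≤ b →
    ∑ i ∈ Finset.Icc (a+1) b, (2:ℝ)^(-((i:ℤ)-(a:ℤ))) ≤ 1 - (2:ℝ)^(-((b:ℤ)-(a:ℤ))) := by
  intro b
  induction b with
  | zero =>
    intro h
    interval_cases a
    simp
  | succ b ih =>
    intro h
    rcases Nat.lt_or_ge a (b+1) with h1 | h2
    · have hab : a ≤ b := Nat.lt_succ_iff.mp h1
      rw [Finset.sum_Icc_succ_top (by omega : a+1 ≤ b+1)]
      have hS := ih hab
      have e : (2:ℝ)^(-((b:ℤ)-(a:ℤ))) = (2:ℝ)^(-(((b:ℕ)+1:ℕ):ℤ)+(a:ℤ)) * 2 := by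
        rw [← zpow_add_one₀ (by norm_num : (2:ℝ) ≠ 0)]
        push_cast
        ring_nf
      have e2 : (-(((b:ℕ)+1:ℕ):ℤ)+(a:ℤ)) = -((((b+1):ℕ):ℤ) - (a:ℤ)) := by push_cast; ring
      rw [e2] at e
      rw [e] at hS
      linarith
    · have ha : a = b+1 := by omega
      subst ha
      rw [Finset.Icc_eq_empty (by omega)]
      simp

lemma geom_le_one (a b : ℕ) :
    ∑ i ∈ Finset.Icc (a+1) b, (2:ℝ)^(-((i:ℤ)-(a:ℤ))) ≤ 1 := by
  rcases le_or_gt a b with h | h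
  · have h2 : (0:ℝ) < (2:ℝ)^(-((b:ℤ)-(a:ℤ))) := by positivity
    linarith [geom_aux a b h]
  · rw [Finset.Icc_eq_empty (by omega)]
    simp

/-- Scheduling upper bound: let `P h f` be the distribution of the nondecreasing
    learner-schedule Markov chain on `{1,…,L}` started at 1, where from state `f`
    the chain jumps to `ℓ > f` with probability `2^{−(ℓ−f)}/(2ℓH)` and otherwise
    stays.  Then for all `h ∈ {1,…,H}` and `f ∈ {2,…,L}`, `P h f ≤ 2^{−f}`. -/
theorem schedule_prob_upper (H L : ℕ) (hH : 1 ≤ H) (hL : 1 ≤ L)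
    (P : ℕ → ℕ → ℝ)
    (hinit : ∀ f, P 0 f = if f = 1 then 1 else 0)
    (hstep : ∀ h : ℕ, ∀ ℓ ∈ Finset.Icc 1 L,
      P (h + 1) ℓ =
        P h ℓ * (1 - ∑ ℓ' ∈ Finset.Icc (ℓ + 1) L,
            (2 : ℝ) ^ (-((ℓ' : ℤ) - (ℓ : ℤ))) / (2 * ℓ' * H))
        + ∑ f ∈ Finset.Icc 1 (ℓ - 1),
            P h f * ((2 : ℝ) ^ (-((ℓ : ℤ) - (f : ℤ))) / (2 * ℓ * H))) :
    ∀ h ∈ Finset.Icc 1 H, ∀ f ∈ Finset.Icc 2 L, P h f ≤ (2 : ℝ) ^ (-(f : ℤ)) := by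
  have hHpos : (0:ℝ) < H := by positivity
  -- nonnegativity of each transition weight
  have wt_nonneg : ∀ ℓ f : ℕ, (0:ℝ) ≤ (2 : ℝ) ^ (-((ℓ : ℤ) - (f : ℤ))) / (2 * ℓ * H) := by
    intro ℓ f; positivity
  -- the escape sum is between 0 and 1
  have S_nonneg : ∀ ℓ : ℕ, (0:ℝ) ≤ ∑ ℓ' ∈ Finset.Icc (ℓ + 1) L,
      (2 : ℝ) ^ (-((ℓ' : ℤ) - (ℓ : ℤ))) / (2 * ℓ' * H) := by
    intro ℓ
    apply Finset.sum_nonneg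
    intro i _
    positivity
  have S_le_one : ∀ ℓ : ℕ, (∑ ℓ' ∈ Finset.Icc (ℓ + 1) L,
      (2 : ℝ) ^ (-((ℓ' : ℤ) - (ℓ : ℤ))) / (2 * ℓ' * H)) ≤ 1 := by
    intro ℓ
    refine le_trans (Finset.sum_le_sum ?_) (geom_le_one ℓ L)
    intro i hi
    simp only [Finset.mem_Icc] at hi
    have hi1 : 1 ≤ i := by omega
    have : (1:ℝ) ≤ 2 * i * H := by
      have : (1:ℝ) ≤ (i:ℝ) := by exact_mod_cast hi1
      have : (1:ℝ) ≤ (H:ℝ) := by exact_mod_cast hH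
      nlinarith [show (1:ℝ) ≤ (i:ℝ) from by exact_mod_cast hi1]
    exact div_le_self (by positivity) this
  -- the main invariant
  have key : ∀ h : ℕ, h ≤ H →
      (∀ f ∈ Finset.Icc 1 L, 0 ≤ P h f) ∧ P h 1 ≤ 1 ∧
      (∀ f ∈ Finset.Icc 2 L, P h f ≤ (h:ℝ) * (2 : ℝ) ^ (-(f : ℤ)) / H) := by
    intro h
    induction h with
    | zero =>
      intro _
      refine ⟨?_, ?_, ?_⟩
      · intro f _
        rw [hinit f]
        split <;> norm_num
      · rw [hinit 1]; norm_num
      · intro f hf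
        simp only [Finset.mem_Icc] at hf
        rw [hinit f]
        rw [if_neg (by omega)]
        positivity
    | succ h ih =>
      intro hh
      obtain ⟨hpos, h1le, hble⟩ := ih (by omega)
      have hone : (1:ℕ) ∈ Finset.Icc 1 L := by simp [hL]
      -- nonnegativity
      have hpos' : ∀ f ∈ Finset.Icc 1 L, 0 ≤ P (h+1) f := by
        intro ℓ hℓ
        rw [hstep h ℓ hℓ]
        simp only [Finset.mem_Icc] at hℓ
        have t1 : 0 ≤ P h ℓ * (1 - ∑ ℓ' ∈ Finset.Icc (ℓ + 1) L,
            (2 : ℝ) ^ (-((ℓ' : ℤ) - (ℓ : ℤ))) / (2 * ℓ' * H)) := by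
          apply mul_nonneg (hpos ℓ (by simp [Finset.mem_Icc]; omega))
          linarith [S_le_one ℓ]
        have t2 : 0 ≤ ∑ f ∈ Finset.Icc 1 (ℓ - 1),
            P h f * ((2 : ℝ) ^ (-((ℓ : ℤ) - (f : ℤ))) / (2 * ℓ * H)) := by
          apply Finset.sum_nonneg
          intro f hf
          simp only [Finset.mem_Icc] at hf
          exact mul_nonneg (hpos f (by simp [Finset.mem_Icc]; omega)) (wt_nonneg ℓ f)
        linarith
      refine ⟨hpos', ?_, ?_⟩
      -- P (h+1) 1 ≤ 1
      · rw [hstep h 1 hone]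
        have hemp : Finset.Icc 1 (1 - 1) = (∅ : Finset ℕ) := rfl
        rw [hemp, Finset.sum_empty, add_zero]
        have := hpos 1 hone
        have hS := S_nonneg 1
        nlinarith
      -- the main bound
      · intro ℓ hℓ
        simp only [Finset.mem_Icc] at hℓ
        have hℓmem : ℓ ∈ Finset.Icc 1 L := by simp [Finset.mem_Icc]; omega
        rw [hstep h ℓ hℓmem]
        have hPl := hpos ℓ hℓmem
        have hb1 : P h ℓ * (1 - ∑ ℓ' ∈ Finset.Icc (ℓ + 1) L,
            (2 : ℝ) ^ (-((ℓ' : ℤ) - (ℓ : ℤ))) / (2 * ℓ' * H)) ≤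
            (h:ℝ) * (2 : ℝ) ^ (-(ℓ : ℤ)) / H := by
          have h2 : P h ℓ * (1 - ∑ ℓ' ∈ Finset.Icc (ℓ + 1) L,
              (2 : ℝ) ^ (-((ℓ' : ℤ) - (ℓ : ℤ))) / (2 * ℓ' * H)) ≤ P h ℓ := by
            nlinarith [S_nonneg ℓ]
          exact le_trans h2 (hble ℓ (by simp [Finset.mem_Icc]; omega))
        -- bound each entry term
        have hb2 : (∑ f ∈ Finset.Icc 1 (ℓ - 1),
            P h f * ((2 : ℝ) ^ (-((ℓ : ℤ) - (f : ℤ))) / (2 * ℓ * H))) ≤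
            (2 : ℝ) ^ (-(ℓ : ℤ)) / H := by
          have step1 : (∑ f ∈ Finset.Icc 1 (ℓ - 1),
              P h f * ((2 : ℝ) ^ (-((ℓ : ℤ) - (f : ℤ))) / (2 * ℓ * H))) ≤
              ∑ f ∈ Finset.Icc 1 (ℓ - 1),
                (2 : ℝ) ^ (1 - (ℓ : ℤ)) / (2 * ℓ * H) := by
            apply Finset.sum_le_sum
            intro f hf
            simp only [Finset.mem_Icc] at hf
            have hPf : P h f ≤ (2:ℝ) ^ (1 - (f:ℤ)) := by
              rcases Nat.eq_or_lt_of_le hf.1 with h' | h'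
              · rw [← h']; simpa using h1le
              · have := hble f (by simp [Finset.mem_Icc]; omega)
                have e1 : (h:ℝ) * (2 : ℝ) ^ (-(f : ℤ)) / H ≤ (2:ℝ) ^ (-(f:ℤ)) := by
                  rw [div_le_iff₀ hHpos]
                  have hhH : (h:ℝ) ≤ (H:ℝ) := by exact_mod_cast (by omega : h ≤ H)
                  nlinarith [show (0:ℝ) < (2:ℝ)^(-(f:ℤ)) from by positivity]
                have e2 : (2:ℝ) ^ (-(f:ℤ)) ≤ (2:ℝ) ^ (1 - (f:ℤ)) := by
                  apply zpow_le_zpow_right₀ (by norm_num) (by omega)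
                linarith
            have hwt := wt_nonneg ℓ f
            have key2 : (2:ℝ) ^ (1 - (f:ℤ)) * ((2 : ℝ) ^ (-((ℓ : ℤ) - (f : ℤ))) / (2 * ℓ * H))
                = (2 : ℝ) ^ (1 - (ℓ : ℤ)) / (2 * ℓ * H) := by
              rw [mul_div_assoc', ← zpow_add₀ (by norm_num : (2:ℝ) ≠ 0)]
              ring_nf
            calc P h f * ((2 : ℝ) ^ (-((ℓ : ℤ) - (f : ℤ))) / (2 * ℓ * H))
                ≤ (2:ℝ) ^ (1 - (f:ℤ)) * ((2 : ℝ) ^ (-((ℓ : ℤ) - (f : ℤ))) / (2 * ℓ * H)) :=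
                  mul_le_mul_of_nonneg_right hPf hwt
              _ = (2 : ℝ) ^ (1 - (ℓ : ℤ)) / (2 * ℓ * H) := key2
          have step2 : (∑ f ∈ Finset.Icc 1 (ℓ - 1),
              (2 : ℝ) ^ (1 - (ℓ : ℤ)) / (2 * ℓ * H)) =
              ((ℓ:ℝ) - 1) * ((2 : ℝ) ^ (1 - (ℓ : ℤ)) / (2 * ℓ * H)) := by
            rw [Finset.sum_const, Nat.card_Icc]
            have : ((ℓ - 1 + 1 - 1 : ℕ) : ℝ) = (ℓ:ℝ) - 1 := by
              have : ℓ - 1 + 1 - 1 = ℓ - 1 := by omega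
              rw [this]
              push_cast [Nat.cast_sub (by omega : 1 ≤ ℓ)]
              ring
            rw [nsmul_eq_mul, this]
          have step3 : ((ℓ:ℝ) - 1) * ((2 : ℝ) ^ (1 - (ℓ : ℤ)) / (2 * ℓ * H)) ≤
              (2 : ℝ) ^ (-(ℓ : ℤ)) / H := by
            have hℓR : (2:ℝ) ≤ (ℓ:ℝ) := by exact_mod_cast hℓ.1
            have hx : (0:ℝ) < (2:ℝ) ^ (-(ℓ:ℤ)) := by positivity
            have e : (2:ℝ) ^ (1 - (ℓ:ℤ)) = 2 * (2:ℝ) ^ (-(ℓ:ℤ)) := by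
              have e' : (1 - (ℓ:ℤ)) = (-(ℓ:ℤ)) + 1 := by ring
              rw [e', zpow_add_one₀ (by norm_num : (2:ℝ) ≠ 0)]
              ring
            rw [e, mul_div_assoc', div_le_div_iff₀ (by positivity) hHpos]
            nlinarith [mul_pos hHpos hx]
          exact (step1.trans step2.le).trans step3
        have goal_eq : ((h:ℕ):ℝ) * (2 : ℝ) ^ (-(ℓ : ℤ)) / H + (2 : ℝ) ^ (-(ℓ : ℤ)) / H =
            (((h+1:ℕ)):ℝ) * (2 : ℝ) ^ (-(ℓ : ℤ)) / H := by
          push_cast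
          ring
        calc _ ≤ ((h:ℕ):ℝ) * (2 : ℝ) ^ (-(ℓ : ℤ)) / H + (2 : ℝ) ^ (-(ℓ : ℤ)) / H :=
              add_le_add hb1 hb2
          _ = _ := goal_eq
  -- conclude
  intro h hh f hf
  simp only [Finset.mem_Icc] at hh
  obtain ⟨_, _, hb⟩ := key h hh.2
  have := hb f hf
  have e1 : (h:ℝ) * (2 : ℝ) ^ (-(f : ℤ)) / H ≤ (2:ℝ) ^ (-(f:ℤ)) := by
    rw [div_le_iff₀ hHpos]
    have hhH : (h:ℝ) ≤ (H:ℝ) := by exact_mod_cast hh.2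
    nlinarith [show (0:ℝ) < (2:ℝ)^(-(f:ℤ)) from by positivity]
  linarith
end

section
/- With the same scheduling process as above (nondecreasing random sequence ℓ₁ ≤ … ≤ ℓ_H in {1,…,L}, transition probability from f to ℓ > f equal to 2^{−(ℓ−f)}/(2ℓH)), for every fixed ℓ ∈ {1,…,L}: Pr[ℓ_H = ℓ] ≥ 2^{−ℓ}/(2Hℓ). -/
/-!
From any state `f ≤ ℓ` the chain enters `ℓ` in one step with probability at least
`2^{-(ℓ-1)}/(2ℓH)`, the jump probability from state `1`. The total outflow from any state is at most
`1/(2H)` and the chain only moves upward, so the mass on `{1, …, ℓ}` decays by at most a factor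
`1 - 1/(2H)` per step; by Bernoulli's inequality at least half of it is still there at time `H - 1`.
-/

open Finset

namespace Schedule

noncomputable def jumpProb (H f ℓ : ℕ) : ℝ :=
  (2 : ℝ) ^ (-((ℓ : ℤ) - (f : ℤ))) / (2 * ℓ * H)

noncomputable def stayProb (H L ℓ : ℕ) : ℝ :=
  1 - ∑ ℓ' ∈ Icc (ℓ + 1) L, jumpProb H ℓ ℓ'

-- The transition probability from `f` to `ℓ` when `f ≤ ℓ`; for `f > ℓ` it is not `0`.
noncomputable def transProb (H L f ℓ : ℕ) : ℝ :=
  if f = ℓ then stayProb H L ℓ else jumpProb H f ℓ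

def IsStep (H L : ℕ) (P : ℕ → ℕ → ℝ) : Prop :=
  ∀ h, ∀ ℓ ∈ Icc 1 L,
    P (h + 1) ℓ = P h ℓ * stayProb H L ℓ + ∑ f ∈ Icc 1 (ℓ - 1), P h f * jumpProb H f ℓ

lemma sum_Icc_two_zpow_neg_sub_le_one (ℓ L : ℕ) :
    ∑ ℓ' ∈ Icc (ℓ + 1) L, (2 : ℝ) ^ (-((ℓ' : ℤ) - ℓ)) ≤ 1 := by
  rw [← Ico_add_one_right_eq_Icc, sum_Ico_eq_sum_range]
  calc ∑ k ∈ range (L + 1 - (ℓ + 1)), (2 : ℝ) ^ (-(((ℓ + 1 + k : ℕ) : ℤ) - ℓ))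
      = 1 / 2 * ∑ k ∈ range (L + 1 - (ℓ + 1)), (1 / 2 : ℝ) ^ k := by
        rw [mul_sum]
        refine sum_congr rfl fun k _ => ?_
        rw [show -(((ℓ + 1 + k : ℕ) : ℤ) - ℓ) = -((k + 1 : ℕ) : ℤ) by push_cast; ring,
          zpow_neg, zpow_natCast]
        simp [pow_succ, mul_comm]
    _ ≤ 1 / 2 * 2 := by gcongr; exact sum_geometric_two_le _
    _ = 1 := by norm_num

lemma jumpProb_le (H f : ℕ) {ℓ : ℕ} (hℓ : 1 ≤ ℓ) :
    jumpProb H f ℓ ≤ (2 : ℝ) ^ (-((ℓ : ℤ) - f)) * (2 * H : ℝ)⁻¹ := by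
  have hℓ' : (1 : ℝ) ≤ ℓ := by exact_mod_cast hℓ
  calc jumpProb H f ℓ = (2 : ℝ) ^ (-((ℓ : ℤ) - f)) * (2 * H : ℝ)⁻¹ * (ℓ : ℝ)⁻¹ := by
        rw [jumpProb]; ring
    _ ≤ _ := mul_le_of_le_one_right (by positivity) (inv_le_one_of_one_le₀ hℓ')

lemma sum_jumpProb_le (H ℓ L : ℕ) :
    ∑ ℓ' ∈ Icc (ℓ + 1) L, jumpProb H ℓ ℓ' ≤ (2 * H : ℝ)⁻¹ :=
  calc ∑ ℓ' ∈ Icc (ℓ + 1) L, jumpProb H ℓ ℓ'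
      ≤ ∑ ℓ' ∈ Icc (ℓ + 1) L, (2 : ℝ) ^ (-((ℓ' : ℤ) - ℓ)) * (2 * H : ℝ)⁻¹ :=
        sum_le_sum fun ℓ' hℓ' => jumpProb_le H ℓ (by grind)
    _ = (∑ ℓ' ∈ Icc (ℓ + 1) L, (2 : ℝ) ^ (-((ℓ' : ℤ) - ℓ))) * (2 * H : ℝ)⁻¹ := (sum_mul ..).symm
    _ ≤ 1 * (2 * H : ℝ)⁻¹ := by gcongr; exact sum_Icc_two_zpow_neg_sub_le_one ℓ L
    _ = (2 * H : ℝ)⁻¹ := one_mul _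

lemma inv_two_mul_natCast_le_half (n : ℕ) : (2 * n : ℝ)⁻¹ ≤ 1 / 2 := by
  rcases n.eq_zero_or_pos with rfl | hn
  · norm_num
  · rw [one_div]
    exact inv_anti₀ two_pos (le_mul_of_one_le_right zero_le_two (by exact_mod_cast hn))

lemma one_sub_inv_le_stayProb (H L ℓ : ℕ) : 1 - (2 * H : ℝ)⁻¹ ≤ stayProb H L ℓ := by
  unfold stayProb
  linarith [sum_jumpProb_le H ℓ L]

lemma half_le_stayProb (H L ℓ : ℕ) : 1 / 2 ≤ stayProb H L ℓ := by
  linarith [one_sub_inv_le_stayProb H L ℓ, inv_two_mul_natCast_le_half H]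

lemma jumpProb_nonneg (H f ℓ : ℕ) : 0 ≤ jumpProb H f ℓ := by
  unfold jumpProb; positivity

lemma jumpProb_mono (H ℓ : ℕ) {f g : ℕ} (hfg : f ≤ g) : jumpProb H f ℓ ≤ jumpProb H g ℓ := by
  unfold jumpProb
  gcongr
  norm_num

lemma jumpProb_self (H ℓ : ℕ) : jumpProb H ℓ ℓ = (2 * (ℓ * H : ℕ) : ℝ)⁻¹ := by
  simp [jumpProb, mul_assoc]

lemma transProb_nonneg (H L f ℓ : ℕ) : 0 ≤ transProb H L f ℓ := by
  unfold transProb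
  split_ifs
  · linarith [half_le_stayProb H L ℓ]
  · exact jumpProb_nonneg H f ℓ

lemma jumpProb_one_le_transProb (H L : ℕ) {f ℓ : ℕ} (hf : 1 ≤ f) :
    jumpProb H 1 ℓ ≤ transProb H L f ℓ := by
  unfold transProb
  split_ifs with hfeq
  · calc jumpProb H 1 ℓ ≤ jumpProb H ℓ ℓ := jumpProb_mono H ℓ (by omega)
      _ ≤ 1 / 2 := (jumpProb_self H ℓ).trans_le (inv_two_mul_natCast_le_half _)
      _ ≤ stayProb H L ℓ := half_le_stayProb H L ℓ
  · exact jumpProb_mono H ℓ hf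

lemma half_le_one_sub_inv_pow (K : ℕ) : 1 / 2 ≤ (1 - (2 * (K + 1 : ℕ) : ℝ)⁻¹) ^ K := by
  calc (1 : ℝ) / 2 ≤ 1 + K * -(2 * (K + 1 : ℕ) : ℝ)⁻¹ := by
        push_cast
        rw [← sub_nonneg]
        field_simp
        ring_nf
        positivity
    _ ≤ (1 + -(2 * (K + 1 : ℕ) : ℝ)⁻¹) ^ K :=
        one_add_mul_le_pow (by linarith [inv_two_mul_natCast_le_half (K + 1)]) K
    _ = _ := by rw [← sub_eq_add_neg]

variable {H L : ℕ} {P : ℕ → ℕ → ℝ}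

lemma IsStep.eq_sum (hstep : IsStep H L P) (h : ℕ) {ℓ : ℕ} (hℓ : ℓ ∈ Icc 1 L) :
    P (h + 1) ℓ = ∑ f ∈ Icc 1 ℓ, P h f * transProb H L f ℓ := by
  obtain ⟨m, rfl⟩ : ∃ m, ℓ = m + 1 := ⟨ℓ - 1, by grind⟩
  rw [hstep h _ hℓ, sum_Icc_succ_top (by omega), add_comm, Nat.add_sub_cancel]
  congr 1
  · exact sum_congr rfl fun f hf => by rw [transProb, if_neg (by grind)]
  · simp [transProb]

lemma IsStep.nonneg (hinit : ∀ f, P 0 f = if f = 1 then 1 else 0) (hstep : IsStep H L P)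
    (h : ℕ) {f : ℕ} (hf : f ∈ Icc 1 L) : 0 ≤ P h f := by
  induction h generalizing f with
  | zero => rw [hinit]; split_ifs <;> norm_num
  | succ h ih =>
    rw [hstep.eq_sum h hf]
    exact sum_nonneg fun g hg =>
      mul_nonneg (ih (by grind)) (transProb_nonneg H L g f)

lemma IsStep.one_sub_inv_pow_le_sum (hinit : ∀ f, P 0 f = if f = 1 then 1 else 0)
    (hstep : IsStep H L P) {ℓ : ℕ} (hℓ : ℓ ∈ Icc 1 L) (h : ℕ) :
    (1 - (2 * H : ℝ)⁻¹) ^ h ≤ ∑ f ∈ Icc 1 ℓ, P h f := by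
  have hsub : ∀ f ∈ Icc 1 ℓ, f ∈ Icc 1 L := fun f hf => by grind
  induction h with
  | zero => simp [hinit, show 1 ≤ ℓ by grind]
  | succ h ih =>
    have hstay : ∀ f ∈ Icc 1 ℓ, (1 - (2 * H : ℝ)⁻¹) * P h f ≤ P (h + 1) f := fun f hf =>
      calc (1 - (2 * H : ℝ)⁻¹) * P h f ≤ P h f * transProb H L f f := by
            rw [mul_comm, transProb, if_pos rfl]
            exact mul_le_mul_of_nonneg_left (one_sub_inv_le_stayProb H L f)
              (hstep.nonneg hinit h (hsub f hf))
        _ ≤ P (h + 1) f := by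
            rw [hstep.eq_sum h (hsub f hf)]
            refine single_le_sum (f := fun g => P h g * transProb H L g f) (fun g hg => ?_) ?_
            · exact mul_nonneg (hstep.nonneg hinit h (by grind))
                (transProb_nonneg H L g f)
            · grind
    calc (1 - (2 * H : ℝ)⁻¹) ^ (h + 1) = (1 - (2 * H : ℝ)⁻¹) * (1 - (2 * H : ℝ)⁻¹) ^ h :=
          pow_succ' _ _
      _ ≤ (1 - (2 * H : ℝ)⁻¹) * ∑ f ∈ Icc 1 ℓ, P h f := by
          gcongr
          linarith [inv_two_mul_natCast_le_half H]
      _ ≤ ∑ f ∈ Icc 1 ℓ, P (h + 1) f := by rw [mul_sum]; exact sum_le_sum hstay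

lemma IsStep.jumpProb_one_mul_sum_le (hinit : ∀ f, P 0 f = if f = 1 then 1 else 0)
    (hstep : IsStep H L P) {ℓ : ℕ} (hℓ : ℓ ∈ Icc 1 L) (h : ℕ) :
    jumpProb H 1 ℓ * ∑ f ∈ Icc 1 ℓ, P h f ≤ P (h + 1) ℓ := by
  rw [hstep.eq_sum h hℓ, mul_sum]
  refine sum_le_sum fun f hf => ?_
  rw [mul_comm]
  exact mul_le_mul_of_nonneg_left (jumpProb_one_le_transProb H L (mem_Icc.mp hf).1)
    (hstep.nonneg hinit h (by grind))

end Schedule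

open Schedule in
theorem schedule_prob_lower_general (H L : ℕ)
    (P : ℕ → ℕ → ℝ)
    (hinit : ∀ f, P 0 f = if f = 1 then 1 else 0)
    (hstep : ∀ h : ℕ, ∀ ℓ ∈ Finset.Icc 1 L,
      P (h + 1) ℓ =
        P h ℓ * (1 - ∑ ℓ' ∈ Finset.Icc (ℓ + 1) L,
            (2 : ℝ) ^ (-((ℓ' : ℤ) - (ℓ : ℤ))) / (2 * ℓ' * H))
        + ∑ f ∈ Finset.Icc 1 (ℓ - 1),
            P h f * ((2 : ℝ) ^ (-((ℓ : ℤ) - (f : ℤ))) / (2 * ℓ * H))) :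
    ∀ ℓ ∈ Finset.Icc 1 L, (2 : ℝ) ^ (-(ℓ : ℤ)) / (2 * H * ℓ) ≤ P H ℓ := by
  replace hstep : IsStep H L P := hstep
  intro ℓ hℓ
  obtain _ | K := H
  · -- at `H = 0` the bound is `x / 0 = 0`
    simpa using hstep.nonneg hinit 0 hℓ
  have hmass := (half_le_one_sub_inv_pow K).trans (hstep.one_sub_inv_pow_le_sum hinit hℓ K)
  calc (2 : ℝ) ^ (-(ℓ : ℤ)) / (2 * (K + 1 : ℕ) * ℓ) = jumpProb (K + 1) 1 ℓ * (1 / 2) := by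
        rw [jumpProb, show -((ℓ : ℤ) - (1 : ℕ)) = -ℓ + 1 by push_cast; ring,
          zpow_add_one₀ two_ne_zero]
        ring
    _ ≤ jumpProb (K + 1) 1 ℓ * ∑ f ∈ Finset.Icc 1 ℓ, P K f := by
        gcongr
        exact jumpProb_nonneg _ _ _
    _ ≤ P (K + 1) ℓ := hstep.jumpProb_one_mul_sum_le hinit hℓ K

/-- Scheduling lower bound: with the same nondecreasing learner-schedule Markov
    chain `P h f` on `{1,…,L}` (jump from `f` to `ℓ > f` with probability
    `2^{−(ℓ−f)}/(2ℓH)`, stay otherwise), for every `ℓ ∈ {1,…,L}`,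
    `P H ℓ ≥ 2^{−ℓ}/(2Hℓ)`. -/
theorem schedule_prob_lower (H L : ℕ) (hH : 1 ≤ H) (hL : 1 ≤ L)
    (P : ℕ → ℕ → ℝ)
    (hinit : ∀ f, P 0 f = if f = 1 then 1 else 0)
    (hstep : ∀ h : ℕ, ∀ ℓ ∈ Finset.Icc 1 L,
      P (h + 1) ℓ =
        P h ℓ * (1 - ∑ ℓ' ∈ Finset.Icc (ℓ + 1) L,
            (2 : ℝ) ^ (-((ℓ' : ℤ) - (ℓ : ℤ))) / (2 * ℓ' * H))
        + ∑ f ∈ Finset.Icc 1 (ℓ - 1),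
            P h f * ((2 : ℝ) ^ (-((ℓ : ℤ) - (f : ℤ))) / (2 * ℓ * H))) :
    ∀ ℓ ∈ Finset.Icc 1 L, (2 : ℝ) ^ (-(ℓ : ℤ)) / (2 * H * ℓ) ≤ P H ℓ :=
  schedule_prob_lower_general H L P hinit hstep
end

section
/- Let X be a finite set, p = (p_x)_{x∈X} a probability vector, and suppose that for each x ∈ X, |q_x − p_x| ≤ sqrt(2·p_x·L/n) + 2·L/(3n) for some L > 0 and n ≥ 1, where q is another vector. Then for every V : X → ℝ and every u > 0, |Σ_x (q_x − p_x)·V(x)| ≤ ‖V‖²_{2,p}/(2u) + |X|·(3u + 2‖V‖_∞)·L/(3n), where ‖V‖²_{2,p} = Σ_x p_x·V(x)² and ‖V‖_∞ = max_x |V(x)|. -/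
open Finset

lemma sqrt_mul_le_half_add' {a b : ℝ} (ha : 0 ≤ a) (hb : 0 ≤ b) :
    Real.sqrt (a * b) ≤ (a + b) / 2 := by
  rw [Real.sqrt_mul ha]
  nlinarith [sq_nonneg (Real.sqrt a - Real.sqrt b), Real.sq_sqrt ha, Real.sq_sqrt hb,
    Real.sqrt_nonneg a, Real.sqrt_nonneg b]

/-- Deterministic core of the refined multinomial concentration bound: if each
    coordinate deviation satisfies a Bernstein-type bound
    `|q_x − p_x| ≤ √(2 p_x L / n) + 2L/(3n)`, then for any `V` and `u > 0`,
    `|Σ_x (q_x − p_x) V(x)| ≤ ‖V‖²_{2,p}/(2u) + |X|(3u + 2‖V‖∞)L/(3n)`. -/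
theorem multinomial_deviation_bound (X : Type*) [Fintype X] [Nonempty X]
    (p q : X → ℝ) (hp0 : ∀ x, 0 ≤ p x) (hp1 : ∑ x, p x = 1)
    (L n : ℝ) (hL : 0 < L) (hn : 1 ≤ n)
    (hdev : ∀ x, |q x - p x| ≤ Real.sqrt (2 * p x * L / n) + 2 * L / (3 * n))
    (V : X → ℝ) (u : ℝ) (hu : 0 < u) :
    |∑ x, (q x - p x) * V x| ≤
      (∑ x, p x * V x ^ 2) / (2 * u) +
        (Fintype.card X : ℝ) *
          (3 * u + 2 * Finset.univ.sup' Finset.univ_nonempty (fun x => |V x|)) * L /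
          (3 * n) := by
  have hn0 : (0:ℝ) < n := lt_of_lt_of_le one_pos hn
  set M := Finset.univ.sup' Finset.univ_nonempty (fun x => |V x|) with hMdef
  have hMx : ∀ x : X, |V x| ≤ M := fun x => Finset.le_sup' (fun y => |V y|) (Finset.mem_univ x)
  have key : ∀ x : X, |q x - p x| * |V x| ≤
      p x * V x ^ 2 / (2 * u) + u * L / n + 2 * L * M / (3 * n) := by
    intro x
    have hpx : 0 ≤ p x := hp0 x
    have h1 : |q x - p x| * |V x| ≤
        (Real.sqrt (2 * p x * L / n) + 2 * L / (3 * n)) * |V x| :=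
      mul_le_mul_of_nonneg_right (hdev x) (abs_nonneg _)
    have h2 : Real.sqrt (2 * p x * L / n) * |V x| ≤ p x * V x ^ 2 / (2 * u) + u * L / n := by
      have heq : Real.sqrt (2 * p x * L / n) * |V x|
          = Real.sqrt ((p x * V x ^ 2 / u) * (2 * u * L / n)) := by
        rw [← Real.sqrt_sq_eq_abs, ← Real.sqrt_mul (by positivity)]
        congr 1
        field_simp
      rw [heq]
      have hab : Real.sqrt ((p x * V x ^ 2 / u) * (2 * u * L / n)) ≤
          ((p x * V x ^ 2 / u) + (2 * u * L / n)) / 2 :=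
        sqrt_mul_le_half_add' (by positivity) (by positivity)
      have : ((p x * V x ^ 2 / u) + (2 * u * L / n)) / 2
          = p x * V x ^ 2 / (2 * u) + u * L / n := by
        field_simp
      linarith [hab, this.le]
    have h3 : 2 * L / (3 * n) * |V x| ≤ 2 * L * M / (3 * n) := by
      have := hMx x
      have h4 : 0 ≤ 2 * L / (3 * n) := by positivity
      calc 2 * L / (3 * n) * |V x| ≤ 2 * L / (3 * n) * M := by
            exact mul_le_mul_of_nonneg_left this h4
        _ = 2 * L * M / (3 * n) := by ring
    nlinarith [h1, h2, h3]
  calc |∑ x, (q x - p x) * V x| ≤ ∑ x, |(q x - p x) * V x| :=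
        Finset.abs_sum_le_sum_abs _ _
    _ = ∑ x, |q x - p x| * |V x| := by simp [abs_mul]
    _ ≤ ∑ x : X, (p x * V x ^ 2 / (2 * u) + u * L / n + 2 * L * M / (3 * n)) :=
        Finset.sum_le_sum (fun x _ => key x)
    _ = (∑ x, p x * V x ^ 2) / (2 * u)
        + (Fintype.card X : ℝ) * (u * L / n + 2 * L * M / (3 * n)) := by
        simp [Finset.sum_add_distrib, ← Finset.sum_div, Finset.card_univ, mul_add]
        ring
    _ = (∑ x, p x * V x ^ 2) / (2 * u)
        + (Fintype.card X : ℝ) * (3 * u + 2 * M) * L / (3 * n) := by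
        field_simp
end
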